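/- arXiv:1405.7481 — 2 statements merged into one kernel-verified Lean document; each statement's English description precedes it below -/
import Mathlib

section
/- Let P be a finitely additive probability on ({0,1}^∞, Σ) such that whenever P = αQ + (1−α)R with α ∈ (0,1) and Q, R finitely additive probabilities, P merges with both Q and R. Then P is an extreme point of the set of finitely additive extensions to Σ of its restriction to the algebra F generated by cylinders. -/
open Filter Topology


/-- A path in `{0,1}^∞`. -/
abbrev BinSeq := ℕ → Bool

/-- The cylinder of length `t` with base `ω`: all sequences agreeing with `ω`
in the first `t` coordinates. -/
def cyl {X : Type*} (ω : ℕ → X) (t : ℕ) : Set (ℕ → X) := {ω' | ∀ i < t, ω' i = ω i}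

/-- An algebra of subsets of `Ω`. -/
structure SetAlgebra (Ω : Type*) where
  sets : Set (Set Ω)
  univ_mem : Set.univ ∈ sets
  compl_mem : ∀ S ∈ sets, Sᶜ ∈ sets
  union_mem : ∀ S ∈ sets, ∀ T ∈ sets, S ∪ T ∈ sets

/-- The algebra is a σ-algebra: closed under countable unions. -/
def SetAlgebra.IsSigmaAlgebra {Ω : Type*} (A : SetAlgebra Ω) : Prop :=
  ∀ f : ℕ → Set Ω, (∀ n, f n ∈ A.sets) → (⋃ n, f n) ∈ A.sets

/-- The power-set algebra. -/
def SetAlgebra.top (Ω : Type*) : SetAlgebra Ω :=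
  ⟨Set.univ, trivial, fun _ _ => trivial, fun _ _ _ _ => trivial⟩

/-- A finitely additive probability on `(Ω, A)`.  The function `m` is defined on all
subsets for convenience; only its values on `A.sets` are constrained. -/
structure FA {Ω : Type*} (A : SetAlgebra Ω) where
  m : Set Ω → ℝ
  nonneg : ∀ S ∈ A.sets, 0 ≤ m S
  total : m Set.univ = 1
  add : ∀ S ∈ A.sets, ∀ T ∈ A.sets, Disjoint S T → m (S ∪ T) = m S + m T

/-- Conditional probability `P(E | C) = P(E ∩ C) / P(C)`. -/
noncomputable def FA.cond {Ω : Type*} {A : SetAlgebra Ω} (P : FA A) (E C : Set Ω) : ℝ :=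
  P.m (E ∩ C) / P.m C

/-- `Q` is absolutely continuous w.r.t. `P` (written `Q ≪ P` in the paper):
for every sequence of events, `P(Eₙ) → 0` implies `Q(Eₙ) → 0`. -/
def AbsCont {Ω : Type*} {A : SetAlgebra Ω} (P Q : FA A) : Prop :=
  ∀ E : ℕ → Set Ω, (∀ n, E n ∈ A.sets) →
    Tendsto (fun n => P.m (E n)) atTop (𝓝 0) → Tendsto (fun n => Q.m (E n)) atTop (𝓝 0)

/-- `P` merges with `Q`: for every `ε > 0`, the `Q`-probability of the set of paths where
some event has conditional probabilities (given the first `t` coordinates) differing by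
more than `ε` tends to `0` as `t → ∞`.  (`sup_E |P(E|ωᵗ) - Q(E|ωᵗ)| > ε` is expressed
equivalently as `∃ E`.) -/
def Merges {A : SetAlgebra BinSeq} (P Q : FA A) : Prop :=
  ∀ ε > 0, Tendsto
    (fun t => Q.m {ω | ∃ E ∈ A.sets, ε < |P.cond E (cyl ω t) - Q.cond E (cyl ω t)|})
    atTop (𝓝 0)

/-- Membership in the algebra `F` generated by the cylinders of `{0,1}^∞`:
the finite unions of cylinders (the empty union giving `∅`). -/
def InCylAlg (S : Set BinSeq) : Prop :=
  ∃ (n : ℕ) (f : Fin n → BinSeq × ℕ), S = ⋃ i, cyl (f i).1 (f i).2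

/-- `Q` agrees with `P` on the algebra generated by cylinders, i.e. `Q` is an
extension of `P_F` from `F` to `Σ`. -/
def ExtAgree {A : SetAlgebra BinSeq} (P Q : FA A) : Prop :=
  ∀ S, InCylAlg S → Q.m S = P.m S

/-- `P` is an extreme point of the set `E(P_F, F, Σ)` of extensions of its restriction
to the cylinder algebra: any representation of `P` as a nontrivial convex combination
of two extensions forces the two extensions to coincide (with `P`). -/
def ExtremePoint {A : SetAlgebra BinSeq} (P : FA A) : Prop :=
  ∀ Q R : FA A, ExtAgree P Q → ExtAgree P R →
    ∀ α : ℝ, 0 < α → α < 1 →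
      (∀ S ∈ A.sets, P.m S = α * Q.m S + (1 - α) * R.m S) →
      ∀ S ∈ A.sets, Q.m S = R.m S

/-- `P` is strongly nonatomic (Savagean): every event can be split in any proportion. -/
def StronglyNonatomic {Ω : Type*} {A : SetAlgebra Ω} (P : FA A) : Prop :=
  ∀ E ∈ A.sets, ∀ α : ℝ, 0 ≤ α → α ≤ 1 → ∃ F ∈ A.sets, F ⊆ E ∧ P.m F = α * P.m E

/-- The Blackwell–Dubins property: `P` merges with every `Q ≪ P`. -/
def BDProp {A : SetAlgebra BinSeq} (P : FA A) : Prop :=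
  ∀ Q : FA A, AbsCont P Q → Merges P Q

/-!
If `P` merges with an extension `M` of `P_F`, then `M = P`. Given `ε > 0`, merging yields a
length `t` with `M(B) < ε`, where `B` is the set of paths `ω` on which some event has conditional
probabilities given `ωᵗ` more than `ε` apart. Whether `ω ∈ B` depends only on `ωᵗ`, so `B`
is a finite union of cylinders and `P(B) = M(B)`. On a cylinder `C` outside `B` we get
`|M(S ∩ C) - P(S ∩ C)| ≤ ε P(C)`, on one inside `B` still `≤ P(C)`; summing over the `2ᵗ`
cylinders of length `t` gives `|M(S) - P(S)| ≤ ε + P(B) < 2ε`. Both components of a convex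
decomposition of `P` into extensions therefore equal `P`.
-/

open MeasureTheory

theorem SetAlgebra.isSetAlgebra {Ω : Type*} (A : SetAlgebra Ω) : IsSetAlgebra A.sets where
  empty_mem := by simpa using A.compl_mem _ A.univ_mem
  compl_mem := fun S hS => A.compl_mem S hS
  union_mem := fun S T hS hT => A.union_mem S hS T hT

namespace FA

variable {Ω : Type*} {A : SetAlgebra Ω} (P : FA A)

theorem m_empty : P.m ∅ = 0 := by
  have h := P.add ∅ A.isSetAlgebra.empty_mem ∅ A.isSetAlgebra.empty_mem disjoint_bot_left
  rw [Set.union_self] at h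
  linarith

theorem m_mono {S T : Set Ω} (hS : S ∈ A.sets) (hT : T ∈ A.sets) (hST : S ⊆ T) :
    P.m S ≤ P.m T := by
  have hTS := A.isSetAlgebra.sdiff_mem hT hS
  have h := P.add S hS (T \ S) hTS Set.disjoint_sdiff_right
  rw [Set.union_sdiff_cancel hST] at h
  linarith [P.nonneg _ hTS]

theorem m_biUnion_finset {ι : Type*} {s : ι → Set Ω} (T : Finset ι)
    (hs : ∀ i ∈ T, s i ∈ A.sets) (hd : (T : Set ι).PairwiseDisjoint s) :
    P.m (⋃ i ∈ T, s i) = ∑ i ∈ T, P.m (s i) := by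
  classical
  induction T using Finset.induction_on with
  | empty => simp [m_empty]
  | @insert a T ha ih =>
    rw [Finset.coe_insert] at hd
    have hT : ∀ i ∈ T, s i ∈ A.sets := fun i hi => hs i (Finset.mem_insert_of_mem hi)
    rw [Finset.set_biUnion_insert, Finset.sum_insert ha,
      P.add _ (hs a (Finset.mem_insert_self a T)) _ (A.isSetAlgebra.biUnion_mem T hT),
      ih hT (hd.subset (Set.subset_insert a _))]
    exact Set.disjoint_iUnion₂_right.mpr fun i hi =>
      hd (Set.mem_insert a _) (Set.mem_insert_of_mem a hi) (ne_of_mem_of_not_mem hi ha).symm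

theorem m_inter_preimage_eq_sum {ι : Type*} (f : Ω → ι) (hf : ∀ i, f ⁻¹' {i} ∈ A.sets)
    {S : Set Ω} (hS : S ∈ A.sets) (T : Finset ι) :
    P.m (S ∩ f ⁻¹' T) = ∑ i ∈ T, P.m (S ∩ f ⁻¹' {i}) := by
  have hunion : S ∩ f ⁻¹' T = ⋃ i ∈ T, S ∩ f ⁻¹' {i} := by
    ext ω
    simp
  rw [hunion]
  refine P.m_biUnion_finset T (fun i _ => A.isSetAlgebra.inter_mem hS (hf i)) ?_
  intro i _ j _ hij
  exact (Set.disjoint_singleton.mpr hij).preimage f |>.mono Set.inter_subset_right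
    Set.inter_subset_right

variable {P} {M : FA A} {S C : Set Ω}

theorem abs_sub_m_inter_le (hS : S ∈ A.sets) (hC : C ∈ A.sets) (hMC : M.m C = P.m C) :
    |M.m (S ∩ C) - P.m (S ∩ C)| ≤ P.m C := by
  have hSC := A.isSetAlgebra.inter_mem hS hC
  have hP := P.m_mono hSC hC Set.inter_subset_right
  have hM := M.m_mono hSC hC Set.inter_subset_right
  rw [abs_le]
  constructor <;> linarith [P.nonneg _ hSC, M.nonneg _ hSC]

theorem abs_sub_m_inter_eq_abs_cond_sub_mul (hS : S ∈ A.sets) (hC : C ∈ A.sets)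
    (hMC : M.m C = P.m C) :
    |M.m (S ∩ C) - P.m (S ∩ C)| = |P.cond S C - M.cond S C| * P.m C := by
  rcases (P.nonneg C hC).eq_or_lt with hzero | hpos
  · rw [← hzero, mul_zero]
    exact le_antisymm (hzero ▸ abs_sub_m_inter_le hS hC hMC) (abs_nonneg _)
  · rw [FA.cond, FA.cond, hMC, ← sub_div, abs_div, abs_of_pos hpos, div_mul_cancel₀ _ hpos.ne',
      abs_sub_comm]

theorem abs_sub_le_of_fibres {ι : Type*} [Fintype ι] (f : Ω → ι)
    (hf : ∀ i, f ⁻¹' {i} ∈ A.sets) (hMf : ∀ i, M.m (f ⁻¹' {i}) = P.m (f ⁻¹' {i}))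
    (hS : S ∈ A.sets) {ε : ℝ} (hε : 0 ≤ ε) (bad : Finset ι)
    (hgood : ∀ i ∉ bad, |P.cond S (f ⁻¹' {i}) - M.cond S (f ⁻¹' {i})| ≤ ε) :
    |M.m S - P.m S| ≤ ε + P.m (f ⁻¹' bad) := by
  classical
  have hsum (Q : FA A) : Q.m S = ∑ i, Q.m (S ∩ f ⁻¹' {i}) := by
    simpa using Q.m_inter_preimage_eq_sum f hf hS Finset.univ
  have hfibres (T : Finset ι) : P.m (f ⁻¹' T) = ∑ i ∈ T, P.m (f ⁻¹' {i}) := by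
    simpa using P.m_inter_preimage_eq_sum f hf A.isSetAlgebra.univ_mem T
  have hcell (i : ι) : |M.m (S ∩ f ⁻¹' {i}) - P.m (S ∩ f ⁻¹' {i})|
      ≤ ε * P.m (f ⁻¹' {i}) + if i ∈ bad then P.m (f ⁻¹' {i}) else 0 := by
    by_cases hi : i ∈ bad
    · rw [if_pos hi]
      linarith [abs_sub_m_inter_le hS (hf i) (hMf i), mul_nonneg hε (P.nonneg _ (hf i))]
    · rw [if_neg hi, add_zero, abs_sub_m_inter_eq_abs_cond_sub_mul hS (hf i) (hMf i)]
      exact mul_le_mul_of_nonneg_right (hgood i hi) (P.nonneg _ (hf i))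
  calc |M.m S - P.m S|
      = |∑ i, (M.m (S ∩ f ⁻¹' {i}) - P.m (S ∩ f ⁻¹' {i}))| := by
        rw [hsum M, hsum P, Finset.sum_sub_distrib]
    _ ≤ ∑ i, |M.m (S ∩ f ⁻¹' {i}) - P.m (S ∩ f ⁻¹' {i})| :=
        Finset.abs_sum_le_sum_abs _ _
    _ ≤ ∑ i, (ε * P.m (f ⁻¹' {i}) + if i ∈ bad then P.m (f ⁻¹' {i}) else 0) :=
        Finset.sum_le_sum fun i _ => hcell i
    _ = ε + P.m (f ⁻¹' bad) := by
        rw [Finset.sum_add_distrib, ← Finset.mul_sum, ← Finset.sum_filter,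
          Finset.filter_mem_eq_inter, Finset.univ_inter,
          ← hfibres, ← hfibres, Finset.coe_univ, Set.preimage_univ, P.total, mul_one]

end FA

/-- The first `t` coordinates of a path, i.e. `ωᵗ`. -/
def trunc {X : Type*} (t : ℕ) (ω : ℕ → X) : Fin t → X := fun i => ω i

theorem cyl_eq_preimage_trunc {X : Type*} (ω : ℕ → X) (t : ℕ) :
    cyl ω t = trunc t ⁻¹' {trunc t ω} := by
  ext ω'
  simp [cyl, trunc, funext_iff, Fin.forall_iff]

theorem trunc_surjective {X : Type*} [Inhabited X] (t : ℕ) :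
    Function.Surjective (trunc (X := X) t) :=
  fun b =>
    ⟨fun i => if h : i < t then b ⟨i, h⟩ else default, funext fun i => by simp [trunc]⟩

theorem inCylAlg_preimage_trunc (t : ℕ) (s : Set (Fin t → Bool)) :
    InCylAlg (trunc t ⁻¹' s) := by
  obtain ⟨n, g, -, rfl⟩ := s.toFinite.fin_param
  let ω := Function.surjInv (trunc_surjective (X := Bool) t)
  refine ⟨n, fun i => (ω (g i), t), ?_⟩
  simp only [cyl_eq_preimage_trunc, ω, Function.surjInv_eq, ← Set.preimage_iUnion,
    Set.iUnion_singleton_eq_range]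

theorem SetAlgebra.mem_of_inCylAlg {A : SetAlgebra BinSeq}
    (hcyl : ∀ (ω : BinSeq) (t : ℕ), cyl ω t ∈ A.sets) {S : Set BinSeq} (hS : InCylAlg S) :
    S ∈ A.sets := by
  obtain ⟨n, f, rfl⟩ := hS
  simpa using A.isSetAlgebra.biUnion_mem Finset.univ fun i _ => hcyl (f i).1 (f i).2

theorem FA.eq_of_merges_of_extAgree {A : SetAlgebra BinSeq}
    (hcyl : ∀ (ω : BinSeq) (t : ℕ), cyl ω t ∈ A.sets) {P M : FA A} (hagree : ExtAgree P M)
    (hmerge : Merges P M) {S : Set BinSeq} (hS : S ∈ A.sets) : M.m S = P.m S := by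
  classical
  refine eq_of_forall_dist_le fun δ hδ => ?_
  obtain ⟨t, ht⟩ :=
    ((hmerge (δ / 2) (half_pos hδ)).eventually (gt_mem_nhds (half_pos hδ))).exists
  have hfibre (b : Fin t → Bool) : InCylAlg (trunc t ⁻¹' {b}) := inCylAlg_preimage_trunc t {b}
  let bad : Finset (Fin t → Bool) := Finset.univ.filter fun b =>
    ∃ E ∈ A.sets, δ / 2 < |P.cond E (trunc t ⁻¹' {b}) - M.cond E (trunc t ⁻¹' {b})|
  have hbad : {ω | ∃ E ∈ A.sets, δ / 2 < |P.cond E (cyl ω t) - M.cond E (cyl ω t)|}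
      = trunc t ⁻¹' bad := by
    ext ω
    simp [bad, cyl_eq_preimage_trunc]
  rw [hbad, hagree _ (inCylAlg_preimage_trunc t _)] at ht
  calc dist (M.m S) (P.m S) ≤ δ / 2 + P.m (trunc t ⁻¹' bad) :=
        FA.abs_sub_le_of_fibres (trunc t) (fun b => SetAlgebra.mem_of_inCylAlg hcyl (hfibre b))
          (fun b => hagree _ (hfibre b)) hS (half_pos hδ).le bad fun b hb =>
            not_lt.mp fun h => hb (Finset.mem_filter.mpr ⟨Finset.mem_univ b, S, hS, h⟩)
    _ ≤ δ := by linarith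

theorem merging_with_components_implies_extremePoint_general
    (A : SetAlgebra BinSeq)
    (hcyl : ∀ (ω : BinSeq) (t : ℕ), cyl ω t ∈ A.sets)
    (P : FA A)
    (hmerge : ∀ Q R : FA A, ∀ α : ℝ, 0 < α → α < 1 →
      (∀ S ∈ A.sets, P.m S = α * Q.m S + (1 - α) * R.m S) →
      Merges P Q ∧ Merges P R) :
    ExtremePoint P := by
  intro Q R hQ hR α hα0 hα1 hconv S hS
  obtain ⟨hPQ, hPR⟩ := hmerge Q R α hα0 hα1 hconv
  rw [FA.eq_of_merges_of_extAgree hcyl hQ hPQ hS, FA.eq_of_merges_of_extAgree hcyl hR hPR hS]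

/-- Theorem 8, (3) ⟹ (1): if `P` merges with both components of any
nontrivial convex decomposition of itself, then `P` is an extreme point of the set of
extensions of its restriction to the cylinder algebra. -/
theorem merging_with_components_implies_extremePoint
    (A : SetAlgebra BinSeq) (hσ : A.IsSigmaAlgebra)
    (hcyl : ∀ (ω : BinSeq) (t : ℕ), cyl ω t ∈ A.sets)
    (P : FA A)
    (hmerge : ∀ Q R : FA A, ∀ α : ℝ, 0 < α → α < 1 →
      (∀ S ∈ A.sets, P.m S = α * Q.m S + (1 - α) * R.m S) →
      Merges P Q ∧ Merges P R) :
    ExtremePoint P :=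
  merging_with_components_implies_extremePoint_general A hcyl P hmerge
end

section
/- Let P be a strongly nonatomic finitely additive probability on ({0,1}^∞, Σ) satisfying the Blackwell–Dubins property (equivalently, P is an extreme point of the set of extensions of its restriction to the cylinder algebra). Then for every ε > 0 there exists a finite partition {C_1, …, C_n} of Ω such that each C_i is a cylinder and P(C_i) ≤ ε for each i. -/
open Filter Topology


/-!
Suppose no length `t` makes every cylinder of length `t` `ε`-small. By compactness of
`{0,1}^ℕ` there is then a path `ω` with `P(ωᵗ) > ε` for all `t`, so `P(ωᵗ)` decreases to some
`λ ≥ ε`. Split a cylinder `ω^{t₀}` with `P(ω^{t₀}) < 3λ/2` into a half `F₀`: the events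
`F₀ ∩ ωᵗ` keep probability at least `λ - P(ω^{t₀})/2 > 0`, while `P(F₀ | ωᵗ) ≤ 3/4`.
An ultrafilter limit of the conditional probabilities `P(· | F₀ ∩ ωˢ)` is, since `P(F₀ ∩ ωˢ)` stays
bounded below, an absolutely continuous `Q` with `Q(F₀ | ωᵗ) = 1` for all `t`, and on `F₀ ∩ ωᵗ` the two predictions of `F₀`
stay `1/4` apart, so `P` does not merge with `Q`. Hence some `t` works, and the cylinders of
length `t` are the required partition.
-/

namespace SetAlgebra

variable {Ω : Type*} (A : SetAlgebra Ω) {S T : Set Ω}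

lemma inter_mem (hS : S ∈ A.sets) (hT : T ∈ A.sets) : S ∩ T ∈ A.sets := by
  simpa [Set.compl_union] using
    A.compl_mem _ (A.union_mem _ (A.compl_mem _ hS) _ (A.compl_mem _ hT))

lemma diff_mem (hS : S ∈ A.sets) (hT : T ∈ A.sets) : S \ T ∈ A.sets :=
  A.inter_mem hS (A.compl_mem _ hT)

end SetAlgebra

namespace FA

variable {Ω : Type*} {A : SetAlgebra Ω} (P : FA A) {S T C : Set Ω}

lemma mono (hS : S ∈ A.sets) (hT : T ∈ A.sets) (hST : S ⊆ T) : P.m S ≤ P.m T := by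
  have h := P.add S hS (T \ S) (A.diff_mem hT hS) Set.disjoint_sdiff_right
  rw [Set.union_sdiff_cancel hST] at h
  linarith [P.nonneg _ (A.diff_mem hT hS)]

lemma measure_diff (hS : S ∈ A.sets) (hC : C ∈ A.sets) :
    P.m (S \ C) = P.m S - P.m (S ∩ C) := by
  have h := P.add _ (A.inter_mem hS hC) _ (A.diff_mem hS hC) Set.disjoint_sdiff_inter.symm
  rw [Set.inter_union_sdiff] at h
  linarith

lemma cond_nonneg (hS : S ∈ A.sets) (hC : C ∈ A.sets) : 0 ≤ P.cond S C :=
  div_nonneg (P.nonneg _ (A.inter_mem hS hC)) (P.nonneg _ hC)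

lemma cond_le_one (hS : S ∈ A.sets) (hC : C ∈ A.sets) : P.cond S C ≤ 1 :=
  div_le_one_of_le₀ (P.mono (A.inter_mem hS hC) hC Set.inter_subset_right) (P.nonneg _ hC)

lemma cond_union (hS : S ∈ A.sets) (hT : T ∈ A.sets) (hC : C ∈ A.sets) (hST : Disjoint S T) :
    P.cond (S ∪ T) C = P.cond S C + P.cond T C := by
  rw [cond, cond, cond, ← add_div, Set.union_inter_distrib_right,
    P.add _ (A.inter_mem hS hC) _ (A.inter_mem hT hC)
      (hST.mono Set.inter_subset_left Set.inter_subset_left)]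

lemma cond_eq_one (hC : P.m C ≠ 0) (hCS : C ⊆ S) : P.cond S C = 1 := by
  rw [cond, Set.inter_eq_self_of_subset_right hCS, div_self hC]

lemma cond_le_div {b : ℝ} (hS : S ∈ A.sets) (hC : C ∈ A.sets) (hb : 0 < b) (hbC : b ≤ P.m C) :
    P.cond S C ≤ P.m S / b :=
  div_le_div₀ (P.nonneg _ hS) (P.mono (A.inter_mem hS hC) hS Set.inter_subset_left) hb hbC

end FA

lemma Ultrafilter.tendsto_limUnder_of_isCompact {ι X : Type*} [TopologicalSpace X] [Nonempty X]
    (V : Ultrafilter ι) {s : Set X} (hs : IsCompact s) {f : ι → X} (hf : ∀ i, f i ∈ s) :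
    Tendsto f V (𝓝 (limUnder V f)) := by
  obtain ⟨x, -, hx⟩ :=
    hs.ultrafilter_le_nhds (V.map f) (le_principal_iff.2 (mem_map.2 (univ_mem' hf)))
  exact tendsto_nhds_limUnder ⟨x, hx⟩

namespace FA

variable {Ω : Type*} {A : SetAlgebra Ω} (P : FA A) {F : ℕ → Set Ω} (V : Ultrafilter ℕ)

lemma tendsto_cond_limUnder (hF : ∀ s, F s ∈ A.sets) {E : Set Ω} (hE : E ∈ A.sets) :
    Tendsto (fun s => P.cond E (F s)) V (𝓝 (limUnder V fun s => P.cond E (F s))) :=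
  V.tendsto_limUnder_of_isCompact isCompact_Icc
    fun s => ⟨P.cond_nonneg hE (hF s), P.cond_le_one hE (hF s)⟩

noncomputable def condLimit (hF : ∀ s, F s ∈ A.sets) (hPF : ∀ s, 0 < P.m (F s)) : FA A where
  m E := limUnder V fun s => P.cond E (F s)
  nonneg _ hE := ge_of_tendsto (P.tendsto_cond_limUnder V hF hE)
    (Eventually.of_forall fun s => P.cond_nonneg hE (hF s))
  total := (tendsto_const_nhds.congr fun s =>
    (P.cond_eq_one (hPF s).ne' (Set.subset_univ _)).symm).limUnder_eq
  add _ hS _ hT hST :=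
    (((P.tendsto_cond_limUnder V hF hS).add (P.tendsto_cond_limUnder V hF hT)).congr fun s =>
      (P.cond_union hS hT (hF s) hST).symm).limUnder_eq

section condLimit

variable (hF : ∀ s, F s ∈ A.sets) (hPF : ∀ s, 0 < P.m (F s))

lemma condLimit_le_div {b : ℝ} (hb : 0 < b) (hbF : ∀ s, b ≤ P.m (F s)) {E : Set Ω}
    (hE : E ∈ A.sets) : (P.condLimit V hF hPF).m E ≤ P.m E / b :=
  le_of_tendsto (P.tendsto_cond_limUnder V hF hE)
    (Eventually.of_forall fun s => P.cond_le_div hE (hF s) hb (hbF s))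

lemma absCont_condLimit {b : ℝ} (hb : 0 < b) (hbF : ∀ s, b ≤ P.m (F s)) :
    AbsCont P (P.condLimit V hF hPF) := fun E hE hPE =>
  squeeze_zero (fun n => (P.condLimit V hF hPF).nonneg _ (hE n))
    (fun n => P.condLimit_le_div V hF hPF hb hbF (hE n)) (by simpa using hPE.div_const b)

lemma condLimit_eq_one {E : Set Ω} (hFE : ∀ᶠ s in V, F s ⊆ E) :
    (P.condLimit V hF hPF).m E = 1 :=
  (tendsto_const_nhds.congr' (hFE.mono fun s hs =>
    (P.cond_eq_one (hPF s).ne' hs).symm)).limUnder_eq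

end condLimit

theorem exists_absCont_eq_one (hF : ∀ s, F s ∈ A.sets) {b : ℝ} (hb : 0 < b)
    (hbF : ∀ s, b ≤ P.m (F s)) :
    ∃ Q : FA A, AbsCont P Q ∧ ∀ E, (∀ᶠ s in atTop, F s ⊆ E) → Q.m E = 1 := by
  obtain ⟨V, hV⟩ := exists_ultrafilter_le (atTop : Filter ℕ)
  have hPF s : 0 < P.m (F s) := hb.trans_le (hbF s)
  exact ⟨P.condLimit V hF hPF, P.absCont_condLimit V hF hPF hb hbF,
    fun E hFE => P.condLimit_eq_one V hF hPF (hV hFE)⟩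

end FA

section Cylinder

variable {X : Type*} {ω ω' : ℕ → X} {s t : ℕ}

lemma mem_cyl_self : ω ∈ cyl ω t := fun _ _ => rfl

lemma cyl_anti (ω : ℕ → X) (hst : s ≤ t) : cyl ω t ⊆ cyl ω s :=
  fun _ hx i hi => hx i (hi.trans_le hst)

lemma cyl_eq_of_mem (h : ω' ∈ cyl ω t) : cyl ω' t = cyl ω t := by
  ext x
  exact forall₂_congr fun i hi => by rw [h i hi]

lemma isOpen_cyl [TopologicalSpace X] [DiscreteTopology X] : IsOpen (cyl ω t) := by
  have : cyl ω t = (Set.Iio t).pi fun i => {ω i} := by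
    ext
    simp [cyl, Set.mem_pi]
  rw [this]
  exact isOpen_set_pi (Set.finite_Iio t) fun _ _ => isOpen_discrete _

lemma exists_partition_cyl [Fintype X] [Inhabited X] (t : ℕ) :
    ∃ (n : ℕ) (f : Fin n → (ℕ → X) × ℕ),
      (⋃ i, cyl (f i).1 (f i).2) = Set.univ ∧
      (∀ i j, i ≠ j → Disjoint (cyl (f i).1 (f i).2) (cyl (f j).1 (f j).2)) ∧
      ∀ i, (f i).2 = t := by
  classical
  let res : (ℕ → X) → Fin t → X := fun x k => x k
  let extend : (Fin t → X) → ℕ → X := fun u k => if h : k < t then u ⟨k, h⟩ else default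
  have hcyl u : cyl (extend u) t = res ⁻¹' {u} := by
    ext x
    refine ⟨fun h => funext fun k => by simpa [extend, k.isLt] using h k k.isLt, ?_⟩
    rintro rfl i hi
    simp [res, extend, hi]
  let e := Fintype.equivFin (Fin t → X)
  refine ⟨_, fun i => (extend (e.symm i), t), ?_, fun i j hij => ?_, fun _ => rfl⟩
  · exact Set.eq_univ_of_forall fun x => Set.mem_iUnion.2 ⟨e (res x), by simp [hcyl]⟩
  · simp only [hcyl]
    exact (Set.disjoint_singleton.2 (e.symm.injective.ne hij)).preimage _

end Cylinder

section BinSeq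

variable {A : SetAlgebra BinSeq} {P : FA A}

lemma exists_forall_lt_measure_cyl (hcyl : ∀ ω t, cyl ω t ∈ A.sets) {ε : ℝ}
    (h : ∀ t, ∃ ω, ε < P.m (cyl ω t)) : ∃ ω, ∀ t, ε < P.m (cyl ω t) := by
  choose g hg using h
  obtain ⟨ω, -, φ, hφ, hlim⟩ := isCompact_univ.tendsto_subseq (x := g) fun _ => Set.mem_univ _
  refine ⟨ω, fun s => ?_⟩
  obtain ⟨n, hn, hsn⟩ := ((hlim.eventually ((isOpen_cyl (t := s)).mem_nhds mem_cyl_self)).and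
    (hφ.tendsto_atTop.eventually_ge_atTop s)).exists
  calc ε < P.m (cyl (g (φ n)) (φ n)) := hg _
    _ ≤ P.m (cyl (g (φ n)) s) := P.mono (hcyl _ _) (hcyl _ _) (cyl_anti _ hsn)
    _ = P.m (cyl ω s) := by rw [cyl_eq_of_mem (ω' := g (φ n)) hn]

theorem StronglyNonatomic.exists_cond_cyl_le (hna : StronglyNonatomic P)
    (hcyl : ∀ ω t, cyl ω t ∈ A.sets) {ω : BinSeq} {ε : ℝ} (hε : 0 < ε)
    (hω : ∀ t, ε ≤ P.m (cyl ω t)) :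
    ∃ E ∈ A.sets, ∃ b > 0, (∀ t, b ≤ P.m (E ∩ cyl ω t)) ∧ ∀ t, P.cond E (cyl ω t) ≤ 3 / 4 := by
  have hbdd : BddBelow (Set.range fun t => P.m (cyl ω t)) := ⟨ε, Set.forall_mem_range.2 hω⟩
  set lam := ⨅ t, P.m (cyl ω t)
  have hlam t : lam ≤ P.m (cyl ω t) := ciInf_le hbdd t
  have hεlam : ε ≤ lam := le_ciInf hω
  obtain ⟨t₀, ht₀⟩ : ∃ t₀, P.m (cyl ω t₀) < 3 / 2 * lam := exists_lt_of_ciInf_lt (by linarith)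
  obtain ⟨E, hE, hEt₀, hPE⟩ := hna _ (hcyl ω t₀) (1 / 2) (by norm_num) (by norm_num)
  refine ⟨E, hE, lam - 1 / 2 * P.m (cyl ω t₀), by linarith, fun t => ?_, fun t => ?_⟩
  -- `P(E) - P(E ∩ ωᵗ) ≤ P(ω^{t₀}) - P(ω^{t₀} ∩ ωᵗ) ≤ P(ω^{t₀}) - λ`
  · have hdiff := P.mono (A.diff_mem hE (hcyl ω t)) (A.diff_mem (hcyl ω t₀) (hcyl ω t))
      (Set.sdiff_subset_sdiff_left hEt₀)
    rw [P.measure_diff hE (hcyl ω t), P.measure_diff (hcyl ω t₀) (hcyl ω t)] at hdiff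
    have := (hlam (max t₀ t)).trans (P.mono (hcyl _ _) (A.inter_mem (hcyl _ _) (hcyl _ _))
      (Set.subset_inter (cyl_anti ω (le_max_left t₀ t)) (cyl_anti ω (le_max_right t₀ t))))
    linarith
  · rw [FA.cond, div_le_iff₀ (by linarith [hlam t])]
    calc P.m (E ∩ cyl ω t)
        ≤ P.m E := P.mono (A.inter_mem hE (hcyl ω t)) hE Set.inter_subset_left
      _ ≤ 3 / 4 * P.m (cyl ω t) := by linarith [hlam t]

theorem BDProp.tendsto_cond_cyl (hbd : BDProp P) (hcyl : ∀ ω t, cyl ω t ∈ A.sets)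
    {ω : BinSeq} {E : Set BinSeq} (hE : E ∈ A.sets) {b : ℝ} (hb : 0 < b)
    (hbE : ∀ t, b ≤ P.m (E ∩ cyl ω t)) :
    Tendsto (fun t => P.cond E (cyl ω t)) atTop (𝓝 1) := by
  obtain ⟨Q, hQ, hQ1⟩ := P.exists_absCont_eq_one (fun t => A.inter_mem hE (hcyl ω t)) hb hbE
  have hQcond t : Q.cond E (cyl ω t) = 1 := by
    have hsub : ∀ᶠ s in atTop, E ∩ cyl ω s ⊆ E ∩ cyl ω t := by
      filter_upwards [eventually_ge_atTop t] with s hs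
      exact Set.inter_subset_inter_right E (cyl_anti ω hs)
    rw [FA.cond, hQ1 _ hsub, hQ1 _ (hsub.mono fun _ h => h.trans Set.inter_subset_right), div_one]
  rw [Metric.tendsto_nhds]
  intro δ hδ
  filter_upwards [(hbd Q hQ (δ / 2) (half_pos hδ)).eventually (gt_mem_nhds one_pos)] with t ht
  -- If `P(E | ωᵗ)` is `δ`-far from `Q(E | ωᵗ) = 1`, every `E ∩ ωˢ` with `s ≥ t` lies in the
  -- set where `P` and `Q` disagree, which then has `Q`-probability `1`.
  by_contra! hfar
  refine ht.ne (hQ1 _ ?_)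
  filter_upwards [eventually_ge_atTop t] with s hs ω' hω'
  refine ⟨E, hE, ?_⟩
  rw [cyl_eq_of_mem (cyl_anti ω hs hω'.2), hQcond, ← Real.dist_eq]
  linarith

end BinSeq

theorem partition_into_small_cylinders_general
    (A : SetAlgebra BinSeq)
    (hcyl : ∀ (ω : BinSeq) (t : ℕ), cyl ω t ∈ A.sets)
    (P : FA A) (hna : StronglyNonatomic P) (hbd : BDProp P)
    (ε : ℝ) (hε : 0 < ε) :
    ∃ (n : ℕ) (f : Fin n → BinSeq × ℕ),
      (⋃ i, cyl (f i).1 (f i).2) = Set.univ ∧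
      (∀ i j, i ≠ j → Disjoint (cyl (f i).1 (f i).2) (cyl (f j).1 (f j).2)) ∧
      (∀ i, P.m (cyl (f i).1 (f i).2) ≤ ε) := by
  obtain ⟨t, ht⟩ : ∃ t, ∀ ω, P.m (cyl ω t) ≤ ε := by
    by_contra! h
    obtain ⟨ω, hω⟩ := exists_forall_lt_measure_cyl hcyl h
    obtain ⟨E, hE, b, hb, hbE, hcond⟩ := hna.exists_cond_cyl_le hcyl hε fun t => (hω t).le
    have := le_of_tendsto' (hbd.tendsto_cond_cyl hcyl hE hb hbE) hcond
    norm_num at this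
  obtain ⟨n, f, hcover, hdisj, hlen⟩ := exists_partition_cyl (X := Bool) t
  exact ⟨n, f, hcover, hdisj, fun i => by rw [hlen i]; exact ht _⟩

/-- Theorem 9: a strongly nonatomic `P` with the Blackwell–Dubins
property admits, for every `ε > 0`, a finite partition of `Ω` into cylinders each of
probability at most `ε`. -/
theorem partition_into_small_cylinders
    (A : SetAlgebra BinSeq) (hσ : A.IsSigmaAlgebra)
    (hcyl : ∀ (ω : BinSeq) (t : ℕ), cyl ω t ∈ A.sets)
    (P : FA A) (hna : StronglyNonatomic P) (hbd : BDProp P)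
    (ε : ℝ) (hε : 0 < ε) :
    ∃ (n : ℕ) (f : Fin n → BinSeq × ℕ),
      (⋃ i, cyl (f i).1 (f i).2) = Set.univ ∧
      (∀ i j, i ≠ j → Disjoint (cyl (f i).1 (f i).2) (cyl (f j).1 (f j).2)) ∧
      (∀ i, P.m (cyl (f i).1 (f i).2) ≤ ε) :=
  partition_into_small_cylinders_general A hcyl P hna hbd ε hε
end
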